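/- Let x^∞ be a sequence over a finite alphabet 𝒳. Then liminf_{k→∞} liminf_{n→∞} (1/k) Ĥ^k_sw(x^n) ≤ liminf_{k→∞} liminf_{n→∞} (1/k) Ĥ^k(x^n) and limsup_{k→∞} limsup_{n→∞} (1/k) Ĥ^k_sw(x^n) ≤ limsup_{k→∞} limsup_{n→∞} (1/k) Ĥ^k(x^n); that is, the best-case and worst-case sliding-window compressibilities are upper-bounded by the corresponding block-by-block quantities. -/

import Mathlib

open Filter

/-- Base-2 Shannon entropy of a finitely-supported distribution given as a function. -/
noncomputable def ent2 {β : Type*} [Fintype β] (q : β → ℝ) : ℝ :=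
  ∑ b, -(q b * Real.logb 2 (q b))

/-- The `k`-th order block-by-block empirical distribution of `x^n`: the fraction of the
`⌊n/k⌋` disjoint `k`-blocks of `x^n` equal to a given word `w`. -/
noncomputable def blockDist {𝒳 : Type*} [DecidableEq 𝒳] (x : ℕ → 𝒳) (k n : ℕ)
    (w : Fin k → 𝒳) : ℝ :=
  (((Finset.range (n / k)).filter
      (fun i => (fun j : Fin k => x (k * i + (j : ℕ))) = w)).card : ℝ) / ((n / k : ℕ) : ℝ)

/-- The `k`-th order block-by-block empirical entropy `Ĥ^k(x^n)` (base 2). -/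
noncomputable def Hblock {𝒳 : Type*} [Fintype 𝒳] [DecidableEq 𝒳] (x : ℕ → 𝒳) (k n : ℕ) : ℝ :=
  ent2 (blockDist x k n)

/-- The `k`-th order sliding-window empirical distribution of `x^n`: the fraction of the
`n−k+1` length-`k` windows of `x^n` equal to a given word `w`. -/
noncomputable def swDist {𝒳 : Type*} [DecidableEq 𝒳] (x : ℕ → 𝒳) (k n : ℕ)
    (w : Fin k → 𝒳) : ℝ :=
  (((Finset.range (n - k + 1)).filter
      (fun i => (fun j : Fin k => x (i + (j : ℕ))) = w)).card : ℝ) / ((n - k + 1 : ℕ) : ℝ)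

/-- The `k`-th order sliding-window empirical entropy `Ĥ^k_sw(x^n)` (base 2). -/
noncomputable def Hsw {𝒳 : Type*} [Fintype 𝒳] [DecidableEq 𝒳] (x : ℕ → 𝒳) (k n : ℕ) : ℝ :=
  ent2 (swDist x k n)

/-!
Fix a block length `m`. Writing `i = m ⌊i/m⌋ + (i mod m)`, the `k`-window starting at `i` is a
function of the phase `i mod m` and of the `L = ⌊k/m⌋ + 2` consecutive `m`-blocks of the fixed
grid with indices `⌊i/m⌋ + t`, `t < L`. Data processing and subadditivity of entropy therefore give
`Ĥ^k_sw(x^n) ≤ log m + ∑_t H_t`, where `H_t` is the entropy of the empirical law of the `t`-th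
shifted block. Each such law is within `O(1/n)` of the order-`m` block-by-block law, so uniform
continuity of `p ↦ -p log p` on `[0, 1]` gives `Ĥ^k_sw(x^n) ≤ log m + L (Ĥ^m(x^n) + o(1))`. Dividing
by `k` and letting first `n → ∞` and then `k → ∞` bounds both sliding-window compressibilities by
the corresponding `n`-limit of `Ĥ^m(x^n) / m`, for every `m`.
-/

open Filter Finset Real Topology

noncomputable def entropy {β : Type*} [Fintype β] (p : β → ℝ) : ℝ := ∑ b, negMulLog (p b)

noncomputable def empDist {β : Type*} [DecidableEq β] (g : ℕ → β) (N : ℕ) (b : β) : ℝ :=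
  Nat.count (fun i => g i = b) N / N

section Entropy

variable {ι β : Type*} [Fintype β]

theorem entropy_le_neg_sum_mul_log {p q : β → ℝ} (hp : ∀ b, 0 ≤ p b) (hq : ∀ b, 0 ≤ q b)
    (hsum : ∑ b, q b ≤ ∑ b, p b) (hpq : ∀ b, q b = 0 → p b = 0) :
    entropy p ≤ -∑ b, p b * log (q b) := by
  have key : ∀ b, negMulLog (p b) + p b * log (q b) ≤ q b - p b := by
    intro b
    rcases (hp b).eq_or_lt with h | h
    · simp [← h, hq b]
    · have hqb : 0 < q b := (hq b).lt_of_ne' fun h0 => h.ne' (hpq b h0)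
      have hlog := log_le_sub_one_of_pos (div_pos hqb h)
      rw [log_div hqb.ne' h.ne'] at hlog
      have := mul_le_mul_of_nonneg_left hlog h.le
      rw [mul_sub_one, mul_div_cancel₀ _ h.ne'] at this
      simp only [negMulLog, neg_mul]
      linarith
  have := sum_le_sum fun b (_ : b ∈ univ) => key b
  rw [sum_add_distrib, sum_sub_distrib] at this
  unfold entropy
  linarith

theorem negMulLog_sum_le (s : Finset ι) {a : ι → ℝ} (ha : ∀ i ∈ s, 0 ≤ a i) :
    negMulLog (∑ i ∈ s, a i) ≤ ∑ i ∈ s, negMulLog (a i) := by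
  rw [negMulLog, neg_mul, sum_mul, ← sum_neg_distrib]
  refine sum_le_sum fun i hi => ?_
  rcases (ha i hi).eq_or_lt with h | h
  · simp [← h]
  · rw [negMulLog, neg_mul, neg_le_neg_iff]
    exact mul_le_mul_of_nonneg_left (log_le_log h (single_le_sum ha hi)) h.le

theorem entropy_nonneg {p : β → ℝ} (hp : ∀ b, p b ∈ Set.Icc 0 1) : 0 ≤ entropy p :=
  sum_nonneg fun b _ => negMulLog_nonneg (hp b).1 (hp b).2

theorem entropy_le_log_card {p : β → ℝ} (hp : ∀ b, 0 ≤ p b) (hp1 : ∑ b, p b = 1) :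
    entropy p ≤ log (Fintype.card β) := by
  have hcard : (Fintype.card β : ℝ) ≠ 0 := by
    have : Nonempty β := by
      by_contra h
      simp [not_nonempty_iff.mp h] at hp1
    exact_mod_cast Fintype.card_ne_zero
  calc entropy p ≤ -∑ b, p b * log (Fintype.card β : ℝ)⁻¹ :=
        entropy_le_neg_sum_mul_log hp (fun _ => by positivity)
          (by simp [hp1, hcard]) (fun _ h => absurd h (by positivity))
    _ = log (Fintype.card β) := by rw [← sum_mul, hp1, log_inv]; ring

theorem tendsto_entropy_sub {l : Filter ι} {p q : ι → β → ℝ}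
    (hp : ∀ i b, p i b ∈ Set.Icc 0 1) (hq : ∀ i b, q i b ∈ Set.Icc 0 1)
    (hpq : ∀ b, Tendsto (fun i => p i b - q i b) l (𝓝 0)) :
    Tendsto (fun i => entropy (p i) - entropy (q i)) l (𝓝 0) := by
  have hunif : UniformContinuousOn negMulLog (Set.Icc 0 1) :=
    isCompact_Icc.uniformContinuousOn_of_continuous continuous_negMulLog.continuousOn
  have hcoord : ∀ b, Tendsto (fun i => negMulLog (p i b) - negMulLog (q i b)) l (𝓝 0) := by
    intro b
    have hpair : Tendsto (fun i => (p i b, q i b)) l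
        (uniformity ℝ ⊓ 𝓟 (Set.Icc 0 1 ×ˢ Set.Icc 0 1)) :=
      tendsto_inf.2 ⟨tendsto_uniformity_iff_dist_tendsto_zero.2 (by
        simpa [Real.dist_eq] using (hpq b).abs), tendsto_principal.2 (Eventually.of_forall
          fun i => ⟨hp i b, hq i b⟩)⟩
    rw [tendsto_zero_iff_abs_tendsto_zero]
    simpa [Function.comp_def, Real.dist_eq] using
      tendsto_uniformity_iff_dist_tendsto_zero.1 (Tendsto.comp hunif hpair)
  simpa [entropy, ← sum_sub_distrib] using tendsto_finsetSum univ fun b _ => hcoord b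

end Entropy

section EmpiricalDistribution

variable {β γ : Type*} [DecidableEq β] [DecidableEq γ]

theorem empDist_mem_Icc (g : ℕ → β) (N : ℕ) (b : β) : empDist g N b ∈ Set.Icc 0 1 :=
  ⟨by unfold empDist; positivity,
    div_le_one_of_le₀ (by exact_mod_cast Nat.count_le _) (Nat.cast_nonneg N)⟩

theorem sum_empDist_fiber [Fintype γ] (f : γ → β) (g : ℕ → γ) (N : ℕ) (b : β) :
    ∑ c with f c = b, empDist g N c = empDist (f ∘ g) N b := by
  simp only [empDist, Nat.count_eq_card_filter_range]
  rw [← sum_div, card_eq_sum_card_fiberwise (f := g) (t := {c | f c = b}) (by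
    intro i hi; simp_all)]
  push_cast
  refine congrArg (· / _) (sum_congr rfl fun c hc => ?_)
  rw [filter_filter]
  congr 2 with i
  simp only [mem_filter, mem_univ, true_and] at hc
  simp +contextual [hc]

theorem empDist_le_empDist_comp [Fintype γ] (f : γ → β) (g : ℕ → γ) (N : ℕ) (c : γ) :
    empDist g N c ≤ empDist (f ∘ g) N (f c) := by
  rw [← sum_empDist_fiber]
  exact single_le_sum (fun c' _ => (empDist_mem_Icc g N c').1) (by simp)

theorem sum_empDist [Fintype β] (g : ℕ → β) {N : ℕ} (hN : N ≠ 0) : ∑ b, empDist g N b = 1 := by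
  have := sum_empDist_fiber (fun _ => ()) g N ()
  simp only [filter_true] at this
  rw [this, empDist, Nat.count_of_forall fun _ _ => rfl]
  exact div_self (by exact_mod_cast hN)

theorem sum_mul_log_empDist_comp [Fintype β] [Fintype γ] (f : γ → β) (g : ℕ → γ) (N : ℕ) :
    ∑ c, empDist g N c * log (empDist (f ∘ g) N (f c)) = -entropy (empDist (f ∘ g) N) := by
  rw [← sum_fiberwise univ f, entropy, ← sum_neg_distrib]
  refine sum_congr rfl fun b _ => ?_
  rw [sum_congr rfl fun c (hc : c ∈ ({c | f c = b} : Finset γ)) => by rw [(mem_filter.1 hc).2],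
    ← sum_mul, sum_empDist_fiber, negMulLog, neg_mul, neg_neg]

theorem entropy_empDist_comp_le [Fintype β] [Fintype γ] (f : γ → β) (g : ℕ → γ) (N : ℕ) :
    entropy (empDist (f ∘ g) N) ≤ entropy (empDist g N) := by
  rw [entropy, entropy, ← sum_fiberwise univ f]
  refine sum_le_sum fun b _ => ?_
  rw [← sum_empDist_fiber]
  exact negMulLog_sum_le _ fun c _ => (empDist_mem_Icc g N c).1

theorem entropy_empDist_le_log_card [Fintype β] (g : ℕ → β) (N : ℕ) :
    entropy (empDist g N) ≤ log (Fintype.card β) := by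
  rcases eq_or_ne N 0 with rfl | hN
  · simpa [entropy, empDist] using log_natCast_nonneg _
  · exact entropy_le_log_card (fun b => (empDist_mem_Icc g N b).1) (sum_empDist g hN)

end EmpiricalDistribution

section Subadditivity

variable {ι β γ : Type*} [Fintype β] [DecidableEq β] [Fintype γ] [DecidableEq γ]

theorem entropy_empDist_prod_le (g : ℕ → β) (h : ℕ → γ) {N : ℕ} (hN : N ≠ 0) :
    entropy (empDist (fun i => (g i, h i)) N)
      ≤ entropy (empDist g N) + entropy (empDist h N) := by
  set p := empDist (fun i => (g i, h i)) N
  have hp : ∀ c, 0 ≤ p c := fun c => (empDist_mem_Icc _ N c).1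
  have hfst : ∀ c, p c ≤ empDist g N c.1 := empDist_le_empDist_comp Prod.fst _ N
  have hsnd : ∀ c, p c ≤ empDist h N c.2 := empDist_le_empDist_comp Prod.snd _ N
  have hlog : ∀ c, p c * log (empDist g N c.1 * empDist h N c.2)
      = p c * log (empDist g N c.1) + p c * log (empDist h N c.2) := by
    intro c
    rcases (hp c).eq_or_lt with h0 | h0
    · simp [← h0]
    · rw [log_mul (h0.trans_le (hfst c)).ne' (h0.trans_le (hsnd c)).ne', mul_add]
  have hcross_fst : ∑ c, p c * log (empDist g N c.1) = -entropy (empDist g N) :=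
    sum_mul_log_empDist_comp Prod.fst _ N
  have hcross_snd : ∑ c, p c * log (empDist h N c.2) = -entropy (empDist h N) :=
    sum_mul_log_empDist_comp Prod.snd _ N
  calc entropy p ≤ -∑ c, p c * log (empDist g N c.1 * empDist h N c.2) := by
        refine entropy_le_neg_sum_mul_log hp
          (fun c => mul_nonneg (empDist_mem_Icc g N _).1 (empDist_mem_Icc h N _).1) ?_ ?_
        · rw [sum_empDist _ hN, Fintype.sum_prod_type]
          simp [← mul_sum, sum_empDist _ hN]
        · intro c hc
          rcases mul_eq_zero.1 hc with h0 | h0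
          · exact le_antisymm (h0 ▸ hfst c) (hp c)
          · exact le_antisymm (h0 ▸ hsnd c) (hp c)
    _ = entropy (empDist g N) + entropy (empDist h N) := by
        simp only [hlog, sum_add_distrib, hcross_fst, hcross_snd]
        ring

theorem entropy_empDist_pi_le [Fintype ι] [DecidableEq ι] (G : ℕ → ι → β) {N : ℕ}
    (hN : N ≠ 0) :
    entropy (empDist G N) ≤ ∑ t, entropy (empDist (fun i => G i t) N) := by
  set p := empDist G N
  set q := fun t => empDist (fun i => G i t) N
  have hp : ∀ x, 0 ≤ p x := fun x => (empDist_mem_Icc _ N x).1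
  have hle : ∀ x t, p x ≤ q t (x t) := fun x t =>
    empDist_le_empDist_comp (fun y : ι → β => y t) G N x
  have hlog : ∀ x, p x * log (∏ t, q t (x t)) = ∑ t, p x * log (q t (x t)) := by
    intro x
    rcases (hp x).eq_or_lt with h0 | h0
    · simp [← h0]
    · rw [log_prod fun t _ => (h0.trans_le (hle x t)).ne', mul_sum]
  have hcross : ∀ t, ∑ x, p x * log (q t (x t)) = -entropy (q t) := fun t =>
    sum_mul_log_empDist_comp (fun y : ι → β => y t) G N
  calc entropy p ≤ -∑ x, p x * log (∏ t, q t (x t)) := by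
        refine entropy_le_neg_sum_mul_log hp
          (fun x => prod_nonneg fun t _ => (empDist_mem_Icc _ N _).1) ?_ ?_
        · rw [sum_empDist _ hN, ← Fintype.prod_sum]
          simp [q, sum_empDist _ hN]
        · intro x hx
          obtain ⟨t, -, ht⟩ := prod_eq_zero_iff.1 hx
          exact le_antisymm (ht ▸ hle x t) (hp x)
    _ = ∑ t, entropy (q t) := by
        simp only [hlog]
        rw [sum_comm]
        simp [hcross]

end Subadditivity

section Counting

open Nat

theorem abs_count_sub_count_le (p : ℕ → Prop) [DecidablePred p] (a b : ℕ) :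
    |(count p a : ℝ) - count p b| ≤ |(a : ℝ) - b| := by
  wlog hab : a ≤ b generalizing a b
  · rw [abs_sub_comm, abs_sub_comm (a : ℝ)]
    exact this b a (le_of_not_ge hab)
  obtain ⟨d, rfl⟩ := exists_add_of_le hab
  rw [count_add, abs_sub_comm, abs_sub_comm (a : ℝ)]
  push_cast
  simp only [add_sub_cancel_left, Nat.abs_cast]
  exact_mod_cast count_le _

theorem count_comp_div_mul (p : ℕ → Prop) [DecidablePred p] (m D : ℕ) :
    count (fun i => p (i / m)) (m * D) = m * count p D := by
  rcases m.eq_zero_or_pos with rfl | hm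
  · simp
  induction D with
  | zero => simp
  | succ D ih =>
    have hblock : ∀ i < m, (m * D + i) / m = D := fun i hi => by
      rw [Nat.mul_add_div hm, Nat.div_eq_of_lt hi, add_zero]
    rw [mul_add_one, count_add, ih, count_succ, mul_add]
    by_cases hD : p D
    · simp [hD, count_of_forall fun i hi => (hblock i hi).symm ▸ hD]
    · simp [hD, count_of_forall_not fun i hi => (hblock i hi).symm ▸ hD]

theorem abs_count_shift_sub_le (p : ℕ → Prop) [DecidablePred p] (t D : ℕ) :
    |(count (fun j => p (t + j)) D : ℝ) - count p D| ≤ t := by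
  have hadd := count_add p t D
  have hadd' := count_add' p t D
  have hmono := count_monotone p (Nat.le_add_left D t)
  have ht := count_le p (n := t)
  have ht' := count_le (fun k => p (k + D)) (n := t)
  have h₁ : count (fun j => p (t + j)) D ≤ count p D + t := by omega
  have h₂ : count p D ≤ count (fun j => p (t + j)) D + t := by omega
  rw [abs_sub_le_iff, sub_le_iff_le_add', sub_le_iff_le_add']
  exact ⟨by exact_mod_cast h₁, by exact_mod_cast h₂⟩

theorem abs_count_stretch_sub_le (p : ℕ → Prop) [DecidablePred p] (m t N D : ℕ) :
    |(count (fun i => p (t + i / m)) N : ℝ) - m * count p D|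
      ≤ |(N : ℝ) - m * D| + m * t := by
  have hN := abs_count_sub_count_le (fun i => p (t + i / m)) N (m * D)
  rw [count_comp_div_mul (fun j => p (t + j)), Nat.cast_mul, Nat.cast_mul] at hN
  calc _ ≤ |(count (fun i => p (t + i / m)) N : ℝ) - m * count (fun j => p (t + j)) D|
        + |m * (count (fun j => p (t + j)) D : ℝ) - m * count p D| := abs_sub_le _ _ _
    _ ≤ |(N : ℝ) - m * D| + m * t := by
        rw [← mul_sub, abs_mul, Nat.abs_cast]
        gcongr
        exact abs_count_shift_sub_le p t D

end Counting

section Stretch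

variable {β : Type*} [DecidableEq β]

theorem abs_div_sub_div_le {a c m N D : ℝ} (hN : 0 < N) (hD : 0 < D) (hc : 0 ≤ c)
    (hcD : c ≤ D) :
    |a / N - c / D| ≤ (|a - m * c| + |m * D - N|) / N := by
  have hsplit : a / N - c / D = ((a - m * c) + c / D * (m * D - N)) / N := by
    field_simp
    ring
  rw [hsplit, abs_div, abs_of_pos hN]
  gcongr
  refine (abs_add_le _ _).trans ?_
  rw [abs_mul, abs_of_nonneg (div_nonneg hc hD.le)]
  gcongr
  exact mul_le_of_le_one_left (abs_nonneg _) ((div_le_one hD).2 hcD)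

theorem abs_empDist_stretch_sub_le (g : ℕ → β) (b : β) (m t : ℕ) {N D : ℕ} (hN : 0 < N)
    (hD : 0 < D) :
    |empDist (fun i => g (t + i / m)) N b - empDist g D b|
      ≤ (2 * |(N : ℝ) - m * D| + m * t) / N := by
  refine (abs_div_sub_div_le (m := m) (by positivity) (by positivity) (Nat.cast_nonneg _)
    (by exact_mod_cast Nat.count_le _)).trans ?_
  refine div_le_div_of_nonneg_right ?_ (Nat.cast_nonneg N)
  linarith [abs_count_stretch_sub_le (fun j => g j = b) m t N D, abs_sub_comm (m * D : ℝ) N]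

theorem tendsto_empDist_stretch_sub (g : ℕ → β) (b : β) {m : ℕ} (hm : 0 < m) (k t : ℕ) :
    Tendsto (fun n => empDist (fun i => g (t + i / m)) (n - k + 1) b - empDist g (n / m) b)
      atTop (𝓝 0) := by
  have hlen : Tendsto (fun n => n - k + 1) atTop atTop :=
    tendsto_atTop_atTop.2 fun b => ⟨b + k, fun n hn => by omega⟩
  refine squeeze_zero_norm' ?_
    ((tendsto_const_div_atTop_nhds_zero_nat (2 * (k + m + 1) + m * t : ℝ)).comp hlen)
  filter_upwards [eventually_ge_atTop (k + m)] with n hn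
  rw [Real.norm_eq_abs, Function.comp_apply]
  refine (abs_empDist_stretch_sub_le g b m t (by omega) (Nat.div_pos (by omega) hm)).trans ?_
  gcongr
  have hlow : m * (n / m) ≤ n := Nat.mul_div_le n m
  have hhigh : n < m * (n / m) + m := by
    have := Nat.div_add_mod n m
    have := Nat.mod_lt n hm
    omega
  have hlow' : (m * (n / m) : ℕ) ≤ (n : ℝ) := by exact_mod_cast hlow
  have hhigh' : (n : ℝ) < (m * (n / m) : ℕ) + m := by exact_mod_cast hhigh
  push_cast [Nat.cast_sub (by omega : k ≤ n)] at hlow' hhigh' ⊢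
  rw [abs_le]
  constructor <;> linarith

end Stretch

section Windows

variable {𝒳 : Type*} (x : ℕ → 𝒳)

def window (k i : ℕ) : Fin k → 𝒳 := fun j => x (i + j)

def block (m j : ℕ) : Fin m → 𝒳 := fun r => x (m * j + r)

theorem exists_window_eq {m k L : ℕ} (hm : 0 < m) (hL : k + m ≤ L * m) :
    ∃ F : Fin m × (Fin L → Fin m → 𝒳) → Fin k → 𝒳, ∀ i,
      window x k i = F (⟨i % m, Nat.mod_lt i hm⟩, fun t => block x m (t + i / m)) := by
  refine ⟨fun c j => c.2 ⟨(c.1 + j) / m, ?_⟩ ⟨(c.1 + j) % m, Nat.mod_lt _ hm⟩, fun i => ?_⟩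
  · rw [Nat.div_lt_iff_lt_mul hm]
    linarith [c.1.isLt, j.isLt]
  · funext j
    simp only [window, block]
    congr 1
    have := Nat.div_add_mod (i % m + j) m
    have := Nat.div_add_mod i m
    rw [mul_add]
    omega

variable [DecidableEq 𝒳]

theorem swDist_eq (k n : ℕ) : swDist x k n = empDist (window x k) (n - k + 1) := by
  funext w
  rw [empDist, Nat.count_eq_card_filter_range]
  rfl

theorem blockDist_eq (m n : ℕ) : blockDist x m n = empDist (block x m) (n / m) := by
  funext w
  rw [empDist, Nat.count_eq_card_filter_range]
  rfl

variable [Fintype 𝒳]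

theorem entropy_window_le {m k L : ℕ} (hm : 0 < m) (hL : k + m ≤ L * m) {N : ℕ} (hN : N ≠ 0) :
    entropy (empDist (window x k) N)
      ≤ log m + ∑ t : Fin L, entropy (empDist (fun i => block x m (t + i / m)) N) := by
  obtain ⟨F, hF⟩ := exists_window_eq x hm hL
  have hphase : entropy (empDist (fun i => (⟨i % m, Nat.mod_lt i hm⟩ : Fin m)) N) ≤ log m := by
    simpa using entropy_empDist_le_log_card (fun i => (⟨i % m, Nat.mod_lt i hm⟩ : Fin m)) N
  calc entropy (empDist (window x k) N)
      ≤ entropy (empDist (fun i => ((⟨i % m, Nat.mod_lt i hm⟩ : Fin m),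
          fun t : Fin L => block x m (t + i / m))) N) := by
        rw [show window x k = F ∘ _ from funext hF]
        exact entropy_empDist_comp_le F _ N
    _ ≤ log m + entropy (empDist (fun i (t : Fin L) => block x m (t + i / m)) N) :=
        (entropy_empDist_prod_le _ _ hN).trans (by gcongr)
    _ ≤ _ := by gcongr; exact entropy_empDist_pi_le _ hN

end Windows

theorem ent2_eq {β : Type*} [Fintype β] (p : β → ℝ) : ent2 p = entropy p / log 2 := by
  rw [ent2, entropy, sum_div]
  congr with b
  rw [negMulLog, logb]
  ring

section Rates

variable {𝒳 : Type*} [Fintype 𝒳] [DecidableEq 𝒳]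

theorem one_div_mul_ent2_empDist_mem_Icc {k : ℕ} (g : ℕ → Fin k → 𝒳) (N : ℕ) :
    1 / (k : ℝ) * ent2 (empDist g N) ∈ Set.Icc 0 (logb 2 (Fintype.card 𝒳)) := by
  have hlog2 : 0 < log 2 := log_pos one_lt_two
  rw [ent2_eq]
  refine ⟨by have := entropy_nonneg (empDist_mem_Icc g N); positivity, ?_⟩
  rcases k.eq_zero_or_pos with rfl | hk
  · simpa [logb] using div_nonneg (log_natCast_nonneg _) hlog2.le
  have hle := entropy_empDist_le_log_card g N
  rw [Fintype.card_fun, Fintype.card_fin, Nat.cast_pow, log_pow] at hle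
  rw [logb, div_mul_div_comm, one_mul, div_le_div_iff₀ (by positivity) hlog2]
  nlinarith

variable (x : ℕ → 𝒳)

theorem sliding_rate_mem_Icc (k n : ℕ) :
    1 / (k : ℝ) * Hsw x k n ∈ Set.Icc 0 (logb 2 (Fintype.card 𝒳)) := by
  rw [Hsw, swDist_eq]
  exact one_div_mul_ent2_empDist_mem_Icc _ _

theorem block_rate_mem_Icc (m n : ℕ) :
    1 / (m : ℝ) * Hblock x m n ∈ Set.Icc 0 (logb 2 (Fintype.card 𝒳)) := by
  rw [Hblock, blockDist_eq]
  exact one_div_mul_ent2_empDist_mem_Icc _ _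

theorem eventually_sliding_rate_le {m k : ℕ} (hm : 0 < m) (hk : 0 < k) {ε : ℝ} (hε : 0 < ε) :
    ∀ᶠ n in atTop, 1 / (k : ℝ) * Hsw x k n
      ≤ logb 2 m / k + (1 + 2 * m / k) * (1 / (m : ℝ) * Hblock x m n) + ε := by
  set L := k / m + 2
  have hL : k + m ≤ L * m := by
    have := Nat.lt_div_mul_add (a := k) hm
    rw [add_mul]
    omega
  have hLm : (L : ℝ) ≤ (k + 2 * m) / m := by
    rw [le_div_iff₀ (by positivity)]
    have := Nat.div_mul_le_self k m
    exact_mod_cast (by rw [add_mul]; omega : L * m ≤ k + 2 * m)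
  have hlog2 : 0 < log 2 := log_pos one_lt_two
  set S := fun (t : ℕ) n => entropy (empDist (fun i => block x m (t + i / m)) (n - k + 1))
  set B := fun n => entropy (empDist (block x m) (n / m))
  have herr : Tendsto (fun n => ∑ t : Fin L, (S t n - B n)) atTop (𝓝 0) := by
    simpa using tendsto_finsetSum (univ : Finset (Fin L)) fun t _ =>
      tendsto_entropy_sub (fun _ => empDist_mem_Icc _ _) (fun _ => empDist_mem_Icc _ _)
        fun b => tendsto_empDist_stretch_sub (block x m) b hm k t
  filter_upwards [herr.eventually_lt_const (by positivity : 0 < ε * k * log 2)] with n hn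
  have hW := entropy_window_le x hm hL (N := n - k + 1) (by omega)
  have hB : 0 ≤ B n := entropy_nonneg (empDist_mem_Icc _ _)
  have key : entropy (empDist (window x k) (n - k + 1))
      ≤ log m + (k + 2 * m) / m * B n + ε * k * log 2 := by
    simp only [sum_sub_distrib, sum_const, card_univ, Fintype.card_fin, nsmul_eq_mul] at hn
    nlinarith [mul_le_mul_of_nonneg_right hLm hB]
  rw [Hsw, Hblock, swDist_eq, blockDist_eq, ent2_eq, ent2_eq, logb]
  calc 1 / (k : ℝ) * (entropy (empDist (window x k) (n - k + 1)) / log 2)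
      ≤ 1 / (k : ℝ) * ((log m + (k + 2 * m) / m * B n + ε * k * log 2) / log 2) := by gcongr
    _ = log m / log 2 / k + (1 + 2 * m / k) * (1 / m * (B n / log 2)) + ε := by
        field_simp

end Rates

section LimitComparison

variable {ι : Type*} {l : Filter ι} [l.NeBot] {u v : ι → ℝ}

theorem limsup_le_of_forall_eventually_le {φ : ℝ → ℝ} (hφ : Monotone φ) (hφc : Continuous φ)
    (hu : IsBoundedUnder (· ≥ ·) l u) (hv : IsBoundedUnder (· ≤ ·) l v)
    (hv' : IsBoundedUnder (· ≥ ·) l v) (h : ∀ ε > 0, ∀ᶠ i in l, u i ≤ φ (v i) + ε) :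
    limsup u l ≤ φ (limsup v l) := by
  refine le_of_forall_pos_le_add fun ε hε => ?_
  have hφε : Monotone fun y => φ y + ε := fun a b hab => add_le_add_left (hφ hab) ε
  calc limsup u l ≤ limsup ((fun y => φ y + ε) ∘ v) l :=
        limsup_le_limsup (h ε hε) hu.isCoboundedUnder_flip (hφε.isBoundedUnder_le_comp hv)
    _ = φ (limsup v l) + ε :=
        (hφε.map_limsup_of_continuousAt v (by fun_prop) hv hv'.isCoboundedUnder_flip).symm

theorem liminf_le_of_forall_eventually_le {φ : ℝ → ℝ} (hφ : Monotone φ) (hφc : Continuous φ)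
    (hu : IsBoundedUnder (· ≥ ·) l u) (hv : IsBoundedUnder (· ≤ ·) l v)
    (hv' : IsBoundedUnder (· ≥ ·) l v) (h : ∀ ε > 0, ∀ᶠ i in l, u i ≤ φ (v i) + ε) :
    liminf u l ≤ φ (liminf v l) := by
  refine le_of_forall_pos_le_add fun ε hε => ?_
  have hφε : Monotone fun y => φ y + ε := fun a b hab => add_le_add_left (hφ hab) ε
  calc liminf u l ≤ liminf ((fun y => φ y + ε) ∘ v) l :=
        liminf_le_liminf (h ε hε) hu (hφε.isBoundedUnder_le_comp hv).isCoboundedUnder_flip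
    _ = φ (liminf v l) + ε :=
        (hφε.map_liminf_of_continuousAt v (by fun_prop) hv.isCoboundedUnder_flip hv').symm

theorem limsup_mem_Icc {a b : ℝ} (h : ∀ i, u i ∈ Set.Icc a b) : limsup u l ∈ Set.Icc a b :=
  ⟨le_limsup_of_frequently_le (Frequently.of_forall fun i => (h i).1)
      (isBoundedUnder_of ⟨b, fun i => (h i).2⟩),
    limsup_le_of_le (isBoundedUnder_of ⟨a, fun i => (h i).1⟩).isCoboundedUnder_flip
      (Eventually.of_forall fun i => (h i).2)⟩

theorem liminf_mem_Icc {a b : ℝ} (h : ∀ i, u i ∈ Set.Icc a b) : liminf u l ∈ Set.Icc a b :=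
  ⟨le_liminf_of_le (isBoundedUnder_of ⟨b, fun i => (h i).2⟩).isCoboundedUnder_flip
      (Eventually.of_forall fun i => (h i).1),
    liminf_le_of_frequently_le (Frequently.of_forall fun i => (h i).2)
      (isBoundedUnder_of ⟨a, fun i => (h i).1⟩)⟩

end LimitComparison

section Compressibility

variable {𝒳 : Type*} [Fintype 𝒳] [DecidableEq 𝒳] (x : ℕ → 𝒳)

theorem limsup_sliding_rate_le {m k : ℕ} (hm : 0 < m) (hk : 0 < k) :
    limsup (fun n => 1 / (k : ℝ) * Hsw x k n) atTop
      ≤ logb 2 m / k + (1 + 2 * m / k) * limsup (fun n => 1 / (m : ℝ) * Hblock x m n) atTop :=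
  limsup_le_of_forall_eventually_le (φ := fun y => logb 2 m / k + (1 + 2 * m / k) * y)
    (fun _ _ hab => by dsimp only; gcongr) (by fun_prop)
    (isBoundedUnder_of ⟨0, fun n => (sliding_rate_mem_Icc x k n).1⟩)
    (isBoundedUnder_of ⟨_, fun n => (block_rate_mem_Icc x m n).2⟩)
    (isBoundedUnder_of ⟨0, fun n => (block_rate_mem_Icc x m n).1⟩)
    fun _ hε => eventually_sliding_rate_le x hm hk hε

theorem liminf_sliding_rate_le {m k : ℕ} (hm : 0 < m) (hk : 0 < k) :
    liminf (fun n => 1 / (k : ℝ) * Hsw x k n) atTop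
      ≤ logb 2 m / k + (1 + 2 * m / k) * liminf (fun n => 1 / (m : ℝ) * Hblock x m n) atTop :=
  liminf_le_of_forall_eventually_le (φ := fun y => logb 2 m / k + (1 + 2 * m / k) * y)
    (fun _ _ hab => by dsimp only; gcongr) (by fun_prop)
    (isBoundedUnder_of ⟨0, fun n => (sliding_rate_mem_Icc x k n).1⟩)
    (isBoundedUnder_of ⟨_, fun n => (block_rate_mem_Icc x m n).2⟩)
    (isBoundedUnder_of ⟨0, fun n => (block_rate_mem_Icc x m n).1⟩)
    fun _ hε => eventually_sliding_rate_le x hm hk hε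

theorem tendsto_logb_div_add_mul (m : ℕ) (b : ℝ) :
    Tendsto (fun k : ℕ => logb 2 m / k + (1 + 2 * m / k) * b) atTop (𝓝 b) := by
  simpa using (tendsto_const_div_atTop_nhds_zero_nat (logb 2 m)).add
    (((tendsto_const_nhds (x := (1 : ℝ))).add
      (tendsto_const_div_atTop_nhds_zero_nat (2 * m : ℝ))).mul_const b)

theorem limsup_limsup_sliding_rate_le {m : ℕ} (hm : 0 < m) :
    limsup (fun k : ℕ => limsup (fun n => 1 / (k : ℝ) * Hsw x k n) atTop) atTop
      ≤ limsup (fun n => 1 / (m : ℝ) * Hblock x m n) atTop := by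
  have hlim := tendsto_logb_div_add_mul m (limsup (fun n => 1 / (m : ℝ) * Hblock x m n) atTop)
  refine (limsup_le_limsup ((eventually_gt_atTop 0).mono fun k hk =>
      limsup_sliding_rate_le x hm hk) ?_ hlim.isBoundedUnder_le).trans hlim.limsup_eq.le
  exact (isBoundedUnder_of ⟨0, fun k =>
    (limsup_mem_Icc fun n => sliding_rate_mem_Icc x k n).1⟩).isCoboundedUnder_flip

theorem liminf_liminf_sliding_rate_le {m : ℕ} (hm : 0 < m) :
    liminf (fun k : ℕ => liminf (fun n => 1 / (k : ℝ) * Hsw x k n) atTop) atTop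
      ≤ liminf (fun n => 1 / (m : ℝ) * Hblock x m n) atTop := by
  have hlim := tendsto_logb_div_add_mul m (liminf (fun n => 1 / (m : ℝ) * Hblock x m n) atTop)
  refine (liminf_le_liminf ((eventually_gt_atTop 0).mono fun k hk =>
      liminf_sliding_rate_le x hm hk) ?_ hlim.isBoundedUnder_le.isCoboundedUnder_flip).trans
    hlim.liminf_eq.le
  exact isBoundedUnder_of ⟨0, fun k => (liminf_mem_Icc fun n => sliding_rate_mem_Icc x k n).1⟩

end Compressibility

/-- The paper's Lemma 6 (Appendix A): the best-case and worst-case sliding-window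
compressibilities are upper-bounded by the corresponding block-by-block quantities. -/
theorem sliding_le_block {𝒳 : Type*} [Fintype 𝒳] [DecidableEq 𝒳] (x : ℕ → 𝒳) :
    (liminf (fun k : ℕ => liminf (fun n : ℕ => (1 / (k : ℝ)) * Hsw x k n) atTop) atTop
      ≤ liminf (fun k : ℕ => liminf (fun n : ℕ => (1 / (k : ℝ)) * Hblock x k n) atTop) atTop)
    ∧ (limsup (fun k : ℕ => limsup (fun n : ℕ => (1 / (k : ℝ)) * Hsw x k n) atTop) atTop
      ≤ limsup (fun k : ℕ => limsup (fun n : ℕ => (1 / (k : ℝ)) * Hblock x k n) atTop) atTop) := by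
  constructor
  · refine le_liminf_of_le ?_ ((eventually_gt_atTop 0).mono fun m hm =>
      liminf_liminf_sliding_rate_le x hm)
    exact (isBoundedUnder_of ⟨_, fun m =>
      (liminf_mem_Icc fun n => block_rate_mem_Icc x m n).2⟩).isCoboundedUnder_flip
  · refine le_limsup_of_frequently_le ((eventually_gt_atTop 0).mono fun m hm =>
      limsup_limsup_sliding_rate_le x hm).frequently ?_
    exact isBoundedUnder_of ⟨_, fun m => (limsup_mem_Icc fun n => block_rate_mem_Icc x m n).2⟩
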